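/- arXiv:1807.08613 — 2 statements merged into one kernel-verified Lean document; each statement's English description precedes it below -/
import Mathlib

section
/- If m = p₁^{e₁} ⋯ p_k^{e_k} where each p_i is a distinct prime with p_i ≡ ±1 (mod 10), then there are exactly 2^k power Fibonacci sequences modulo m. -/
/-!
A root `x` of `X² - X - 1` satisfies `(2x - 1)² = 5`. For a prime `p ≡ ±1 (mod 5)`, quadratic
reciprocity makes `5` a nonzero square mod `p`, so `X² - X - 1` has a simple root mod `p`, which
Hensel's lemma lifts to `ℤ_[p]` and hence to `ZMod (p ^ k)`. This ring is local with `5` a unit, so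
a root `x₀` has exactly one companion `1 - x₀`, the two differing by the unit `2x₀ - 1`. The Chinese
remainder theorem multiplies the counts over the prime powers.
-/

open Polynomial

theorem IsLocalRing.eq_zero_or_eq_zero_of_mul_eq_zero_of_isUnit_sub {R : Type*} [CommRing R]
    [IsLocalRing R] {a b : R} (hab : a * b = 0) (h : IsUnit (a - b)) : a = 0 ∨ b = 0 := by
  rw [sub_eq_add_neg] at h
  rcases isUnit_or_isUnit_of_isUnit_add h with ha | hb
  · exact Or.inr ((IsUnit.mul_right_eq_zero ha).1 hab)
  · exact Or.inl ((IsUnit.mul_left_eq_zero (IsUnit.neg_iff b |>.1 hb)).1 hab)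

/-- `x` is a root iff `n ↦ xⁿ` satisfies the Fibonacci recurrence. -/
def goldenRoots (R : Type*) [Ring R] : Set R := {x | x ^ 2 = x + 1}

section Ring

variable {R : Type*} [Ring R]

@[simp]
theorem mem_goldenRoots {x : R} : x ∈ goldenRoots R ↔ x ^ 2 = x + 1 := Iff.rfl

theorem RingEquiv.ncard_goldenRoots {S : Type*} [Ring S] (e : R ≃+* S) :
    (goldenRoots R).ncard = (goldenRoots S).ncard := by
  rw [← Nat.card_coe_set_eq, ← Nat.card_coe_set_eq]
  refine Nat.card_congr (e.toEquiv.subtypeEquiv fun x => ?_)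
  simp only [mem_goldenRoots, RingEquiv.toEquiv_eq_coe, EquivLike.coe_coe]
  rw [← map_pow, ← map_one e, ← map_add, e.injective.eq_iff]

theorem ncard_goldenRoots_pi {ι : Type*} [Fintype ι] (S : ι → Type*) [∀ i, Ring (S i)] :
    (goldenRoots (Π i, S i)).ncard = ∏ i, (goldenRoots (S i)).ncard := by
  simp only [← Nat.card_coe_set_eq, ← Nat.card_pi]
  refine Nat.card_congr ((Equiv.subtypeEquivRight fun y => ?_).trans Equiv.subtypePiEquivPi)
  exact funext_iff

end Ring

section CommRing

variable {R : Type*} [CommRing R]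

theorem sq_two_mul_sub_one_of_mem_goldenRoots {x : R} (hx : x ∈ goldenRoots R) :
    (2 * x - 1) ^ 2 = 5 := by
  linear_combination 4 * mem_goldenRoots.1 hx

theorem goldenRoots_eq_pair [IsLocalRing R] (h5 : IsUnit (5 : R)) {x₀ : R}
    (hx₀ : x₀ ∈ goldenRoots R) : goldenRoots R = {x₀, 1 - x₀} := by
  have hu : IsUnit (2 * x₀ - 1) := by
    rwa [← sq_two_mul_sub_one_of_mem_goldenRoots hx₀, isUnit_pow_iff two_ne_zero] at h5
  rw [mem_goldenRoots] at hx₀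
  ext x
  simp only [mem_goldenRoots, Set.mem_insert_iff, Set.mem_singleton_iff]
  constructor
  · intro hx
    have hprod : (x - (1 - x₀)) * (x - x₀) = 0 := by linear_combination hx - hx₀
    have hdiff : IsUnit ((x - (1 - x₀)) - (x - x₀)) := by convert hu using 1; ring
    rcases IsLocalRing.eq_zero_or_eq_zero_of_mul_eq_zero_of_isUnit_sub hprod hdiff with h | h
    · exact Or.inr (sub_eq_zero.1 h)
    · exact Or.inl (sub_eq_zero.1 h)
  · rintro (rfl | rfl)
    · exact hx₀
    · linear_combination hx₀

theorem ncard_goldenRoots_eq_two [IsLocalRing R] (h5 : IsUnit (5 : R)) {x₀ : R}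
    (hx₀ : x₀ ∈ goldenRoots R) : (goldenRoots R).ncard = 2 := by
  rw [goldenRoots_eq_pair h5 hx₀, Set.ncard_pair]
  intro h
  apply h5.ne_zero
  rw [← sq_two_mul_sub_one_of_mem_goldenRoots hx₀]
  linear_combination (2 * x₀ - 1) * h

end CommRing

theorem exists_mem_goldenRoots_zmod_prime {p : ℕ} [Fact p.Prime] (hp : p % 5 = 1 ∨ p % 5 = 4) :
    ∃ x : ZMod p, x ∈ goldenRoots (ZMod p) := by
  have hp2 : p ≠ 2 := by rintro rfl; omega
  have h5 : IsSquare (5 : ZMod p) := by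
    have : Fact (Nat.Prime 5) := ⟨Nat.prime_five⟩
    have hp5 : IsSquare (p : ZMod 5) := by
      rw [← ZMod.natCast_mod]
      rcases hp with h | h <;> rw [h]
      exacts [⟨1, rfl⟩, ⟨2, rfl⟩]
    simpa using (ZMod.exists_sq_eq_prime_iff_of_mod_four_eq_one (p := 5) rfl hp2).1 hp5
  obtain ⟨y, hy⟩ := h5
  have h2 : (2 : ZMod p) ≠ 0 := by exact_mod_cast ZMod.prime_ne_zero p 2 hp2
  refine ⟨(1 + y) / 2, ?_⟩
  rw [mem_goldenRoots]
  field_simp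
  linear_combination -hy

theorem PadicInt.exists_isRoot_of_toZMod {p : ℕ} [Fact p.Prime] {f : ℤ_[p][X]} (hf : f.Monic)
    {a : ℤ_[p]} (ha : toZMod (f.eval a) = 0) (ha' : toZMod (f.derivative.eval a) ≠ 0) :
    ∃ z, f.IsRoot z := by
  rw [ne_eq, ← RingHom.mem_ker, ker_toZMod] at ha'
  rw [← RingHom.mem_ker, ker_toZMod] at ha
  obtain ⟨z, hz, -⟩ := HenselianRing.is_henselian f hf a ha
    ((IsLocalRing.notMem_maximalIdeal.1 ha').map _)
  exact ⟨z, hz⟩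

theorem exists_mem_goldenRoots_zmod_prime_pow {p : ℕ} [Fact p.Prime] (hp : p % 5 = 1 ∨ p % 5 = 4)
    (k : ℕ) : ∃ x : ZMod (p ^ k), x ∈ goldenRoots (ZMod (p ^ k)) := by
  obtain ⟨x₀, hx₀⟩ := exists_mem_goldenRoots_zmod_prime hp
  obtain ⟨a, rfl⟩ := ZMod.ringHom_surjective PadicInt.toZMod x₀
  have : Fact (Nat.Prime 5) := ⟨Nat.prime_five⟩
  have h5 : (5 : ZMod p) ≠ 0 := by exact_mod_cast ZMod.prime_ne_zero p 5 (by omega)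
  rw [← sq_two_mul_sub_one_of_mem_goldenRoots hx₀] at h5
  rw [mem_goldenRoots] at hx₀
  obtain ⟨z, hz⟩ := PadicInt.exists_isRoot_of_toZMod (f := X ^ 2 - X - 1) (by monicity!) (a := a)
    (by simp [hx₀]) (by simpa [map_ofNat PadicInt.toZMod 2, one_add_one_eq_two] using h5)
  refine ⟨PadicInt.toZModPow k z, ?_⟩
  rw [mem_goldenRoots, ← map_pow, ← map_one (PadicInt.toZModPow k), ← map_add]
  congr 1
  simpa [sub_eq_zero, sub_sub] using hz

theorem ncard_goldenRoots_zmod_prime_pow {p k : ℕ} (hp : p.Prime) (hp5 : p % 5 = 1 ∨ p % 5 = 4)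
    (hk : k ≠ 0) : (goldenRoots (ZMod (p ^ k))).ncard = 2 := by
  have : Fact p.Prime := ⟨hp⟩
  have : Fact (1 < p ^ k) := ⟨Nat.one_lt_pow hk hp.one_lt⟩
  have : IsLocalRing (ZMod (p ^ k)) :=
    .of_surjective' (PadicInt.toZModPow k) (ZMod.ringHom_surjective _)
  have h5 : IsUnit (5 : ZMod (p ^ k)) := by
    have hcop : Nat.Coprime 5 (p ^ k) :=
      .pow_right k ((Nat.coprime_primes Nat.prime_five hp).2 (by omega))
    exact_mod_cast (ZMod.isUnit_iff_coprime 5 (p ^ k)).2 hcop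
  obtain ⟨x₀, hx₀⟩ := exists_mem_goldenRoots_zmod_prime_pow hp5 k
  exact ncard_goldenRoots_eq_two h5 hx₀

theorem count_power_fib_composite (S : Finset ℕ) (e : ℕ → ℕ) (m : ℕ)
    (hS : ∀ p ∈ S, p.Prime ∧ (p % 10 = 1 ∨ p % 10 = 9) ∧ 1 ≤ e p)
    (hm : m = ∏ p ∈ S, p ^ e p) :
    Set.ncard {x : ZMod m | x ^ 2 = x + 1} = 2 ^ S.card := by
  let a : S → ℕ := fun p => (p : ℕ) ^ e p
  have hcop : Pairwise (Function.onFun Nat.Coprime a) := fun p q hpq =>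
    Nat.Coprime.pow _ _ <| (Nat.coprime_primes (hS p p.2).1 (hS q q.2).1).2 (Subtype.coe_ne_coe.2 hpq)
  have hm' : m = ∏ p, a p := hm.trans (Finset.prod_coe_sort S _).symm
  subst hm'
  calc (goldenRoots (ZMod (∏ p, a p))).ncard
      = ∏ p, (goldenRoots (ZMod (a p))).ncard := by
        rw [(ZMod.prodEquivPi a hcop).ncard_goldenRoots, ncard_goldenRoots_pi]
    _ = ∏ _p : S, 2 := by
        refine Finset.prod_congr rfl fun p _ => ?_
        obtain ⟨hp, hp10, hep⟩ := hS p p.2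
        exact ncard_goldenRoots_zmod_prime_pow hp (by omega) (by omega)
    _ = 2 ^ S.card := by simp
end

section
/- If m = 5 · p₁^{e₁} ⋯ p_k^{e_k} where each p_i is a distinct prime with p_i ≡ ±1 (mod 10) and p_i ≠ 5, then there are exactly 2^k power Fibonacci sequences modulo m. -/
-- idempotents in ZMod (p^e) are trivial
lemma idem_pp (p e : ℕ) (hp : p.Prime) (he : 1 ≤ e) (t : ZMod (p ^ e)) (ht : t ^ 2 = t) :
    t = 0 ∨ t = 1 := by
  haveI : NeZero (p ^ e) := ⟨pow_ne_zero e hp.pos.ne'⟩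
  set v : ℤ := (t.val : ℤ) with hv_def
  have hv : ((v : ℤ) : ZMod (p ^ e)) = t := by
    rw [hv_def]
    exact_mod_cast ZMod.natCast_rightInverse t
  have hdvd : ((p : ℤ)) ^ e ∣ v * (v - 1) := by
    have h0 : ((v * (v - 1) : ℤ) : ZMod (p ^ e)) = 0 := by
      push_cast
      rw [hv]
      linear_combination ht
    have := (ZMod.intCast_zmod_eq_zero_iff_dvd (v * (v - 1)) (p ^ e)).mp h0
    push_cast at this
    exact this
  have hprime : Prime (p : ℤ) := Nat.prime_iff_prime_int.mp hp
  by_cases hpv : (p : ℤ) ∣ v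
  · left
    have h1 : ¬ (p : ℤ) ∣ (v - 1) := by
      intro h
      have : (p : ℤ) ∣ 1 := by
        have := dvd_sub hpv h
        simpa using this
      exact hprime.not_dvd_one this
    have hcop : IsCoprime ((p : ℤ) ^ e) (v - 1) :=
      (hprime.coprime_iff_not_dvd.mpr h1).pow_left
    have hdv : (p : ℤ) ^ e ∣ v := hcop.dvd_of_dvd_mul_right hdvd
    rw [← hv, ZMod.intCast_zmod_eq_zero_iff_dvd]
    push_cast
    exact hdv
  · right
    have hcop : IsCoprime ((p : ℤ) ^ e) v :=
      (hprime.coprime_iff_not_dvd.mpr hpv).pow_left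
    have hdv : (p : ℤ) ^ e ∣ (v - 1) := hcop.dvd_of_dvd_mul_left hdvd
    have : ((v - 1 : ℤ) : ZMod (p ^ e)) = 0 := by
      rw [ZMod.intCast_zmod_eq_zero_iff_dvd]
      push_cast
      exact hdv
    push_cast at this
    rw [hv] at this
    exact sub_eq_zero.mp this

-- local-ring style zero divisors
lemma loc_pp (p e : ℕ) (hp : p.Prime) (he : 1 ≤ e) (a b : ZMod (p ^ e))
    (hab : a * b = 0) (hu : IsUnit (b - a)) : a = 0 ∨ b = 0 := by
  obtain ⟨w, hw⟩ := hu.exists_right_inv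
  have ht : (-(a * w)) ^ 2 = -(a * w) := by
    linear_combination (w ^ 2) * hab + (-(a * w)) * hw
  rcases idem_pp p e hp he _ ht with h0 | h1
  · left
    have haw : a * w = 0 := by linear_combination -h0
    linear_combination w * hab - a * hw - a * haw
  · right
    have haw : a * w = -1 := by linear_combination -h1
    linear_combination (-w) * hab + b * haw

lemma five_square_mod_p (p : ℕ) (hp : p.Prime) (h10 : p % 10 = 1 ∨ p % 10 = 9) :
    IsSquare (5 : ZMod p) := by
  haveI : Fact p.Prime := ⟨hp⟩
  haveI : Fact (Nat.Prime 5) := ⟨by norm_num⟩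
  have hp2 : p ≠ 2 := by rcases h10 with h | h <;> omega
  have hp5mod : p % 5 = 1 ∨ p % 5 = 4 := by
    have : p % 5 = p % 10 % 5 := (Nat.mod_mod_of_dvd p (by norm_num)).symm
    rcases h10 with h | h <;> omega
  have hrec : legendreSym p 5 = legendreSym 5 p :=
    legendreSym.quadratic_reciprocity_one_mod_four (by norm_num) hp2
  have hpz : ((p : ℤ) : ZMod 5) ≠ 0 := by
    rw [show ((p : ℤ) : ZMod 5) = ((p : ℕ) : ZMod 5) by push_cast; rfl]
    rw [Ne, ZMod.natCast_eq_zero_iff]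
    intro h
    omega
  have hsq : IsSquare ((p : ℤ) : ZMod 5) := by
    rw [show ((p : ℤ) : ZMod 5) = ((p : ℕ) : ZMod 5) by push_cast; rfl]
    rw [show ((p : ℕ) : ZMod 5) = ((p % 5 : ℕ) : ZMod 5) by rw [ZMod.natCast_mod]]
    rcases hp5mod with h | h
    · rw [h]; exact ⟨1, by norm_num⟩
    · rw [h]; exact ⟨2, by norm_num⟩
  have h5p : legendreSym 5 p = 1 := (legendreSym.eq_one_iff 5 hpz).mpr hsq
  have hp5' : legendreSym p 5 = 1 := by rw [hrec]; exact h5p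
  have h50 : ((5 : ℤ) : ZMod p) ≠ 0 := by
    rw [show ((5 : ℤ) : ZMod p) = ((5 : ℕ) : ZMod p) by push_cast; rfl]
    rw [Ne, ZMod.natCast_eq_zero_iff]
    intro h
    have := (Nat.prime_dvd_prime_iff_eq hp (by norm_num)).mp h
    rcases h10 with h' | h' <;> omega
  have := (legendreSym.eq_one_iff p h50).mp hp5'
  rwa [show ((5 : ℤ) : ZMod p) = (5 : ZMod p) by push_cast; rfl] at this

lemma sqrt5_lift (p : ℕ) (hp : p.Prime) (hp2 : p ≠ 2) (hp5 : p ≠ 5)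
    (h : IsSquare (5 : ZMod p)) (e : ℕ) (he : 1 ≤ e) :
    ∃ z : ℤ, (p : ℤ) ^ e ∣ z ^ 2 - 5 := by
  haveI : Fact p.Prime := ⟨hp⟩
  have hprime : Prime (p : ℤ) := Nat.prime_iff_prime_int.mp hp
  induction e, he using Nat.le_induction with
  | base =>
    obtain ⟨r, hr⟩ := h
    refine ⟨(r.val : ℤ), ?_⟩
    rw [pow_one, ← ZMod.intCast_zmod_eq_zero_iff_dvd]
    push_cast
    rw [ZMod.natCast_rightInverse r]
    rw [sq, ← hr]
    ring
  | succ e he ih =>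
    obtain ⟨z, t, ht⟩ := ih
    have hpz : ¬ (p : ℤ) ∣ z := by
      intro hd
      have h1 : (p : ℤ) ∣ z ^ 2 - 5 := ⟨t, ht⟩ |> fun hh =>
        (dvd_pow_self (p : ℤ) (by omega : e ≠ 0)).trans hh
      have h2 : (p : ℤ) ∣ z ^ 2 := by rw [sq]; exact hd.mul_right z
      have h3 : (p : ℤ) ∣ 5 := by
        have := dvd_sub h2 h1
        simpa using this
      have : p ∣ 5 := by exact_mod_cast h3
      exact hp5 ((Nat.prime_dvd_prime_iff_eq hp (by norm_num)).mp this)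
    have hc : IsCoprime ((p : ℤ)) (2 * z) := by
      rw [hprime.coprime_iff_not_dvd]
      intro hd
      rcases hprime.dvd_mul.mp hd with h2 | hz
      · have : p ∣ 2 := by exact_mod_cast h2
        exact hp2 ((Nat.prime_dvd_prime_iff_eq hp (by norm_num)).mp this)
      · exact hpz hz
    obtain ⟨u, v, huv⟩ := hc.symm
    refine ⟨z + (-t * u) * (p : ℤ) ^ e, ?_⟩
    have hkey : (z + (-t * u) * (p : ℤ) ^ e) ^ 2 - 5
        = (p : ℤ) * (p : ℤ) ^ e * (t * v) + (t * u) ^ 2 * ((p : ℤ) ^ e) ^ 2 := by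
      linear_combination ht - t * (p : ℤ) ^ e * huv
    rw [hkey]
    apply dvd_add
    · exact ⟨t * v, by rw [pow_succ]; ring⟩
    · apply Dvd.dvd.mul_left
      rw [← pow_mul]
      exact pow_dvd_pow (p : ℤ) (by omega)

lemma exists_sqrt5 (p : ℕ) (hp : p.Prime) (h10 : p % 10 = 1 ∨ p % 10 = 9) (hp5 : p ≠ 5)
    (e : ℕ) (he : 1 ≤ e) : ∃ y : ZMod (p ^ e), y ^ 2 = 5 := by
  have hp2 : p ≠ 2 := by rcases h10 with h | h <;> omega
  obtain ⟨z, hz⟩ := sqrt5_lift p hp hp2 hp5 (five_square_mod_p p hp h10) e he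
  refine ⟨(z : ZMod (p ^ e)), ?_⟩
  have h0 : ((z ^ 2 - 5 : ℤ) : ZMod (p ^ e)) = 0 := by
    rw [ZMod.intCast_zmod_eq_zero_iff_dvd]
    push_cast
    exact hz
  push_cast at h0
  linear_combination h0

lemma card_sol_pp (p : ℕ) (hp : p.Prime) (h10 : p % 10 = 1 ∨ p % 10 = 9) (hp5 : p ≠ 5)
    (e : ℕ) (he : 1 ≤ e) :
    Nat.card {x : ZMod (p ^ e) // x ^ 2 = x + 1} = 2 := by
  have hp2 : p ≠ 2 := by rcases h10 with h | h <;> omega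
  haveI : Fact (1 < p ^ e) := ⟨Nat.one_lt_pow (by omega) hp.one_lt⟩
  obtain ⟨y, hy⟩ := exists_sqrt5 p hp h10 hp5 e he
  have h2u : IsUnit (2 : ZMod (p ^ e)) := by
    have : ((2 : ℕ) : ZMod (p ^ e)) = (2 : ZMod (p ^ e)) := by norm_num
    rw [← this, ZMod.isUnit_iff_coprime]
    exact Nat.Coprime.pow_right e ((Nat.coprime_primes (by norm_num) hp).mpr (Ne.symm hp2))
  have h5u : IsUnit (5 : ZMod (p ^ e)) := by
    have : ((5 : ℕ) : ZMod (p ^ e)) = (5 : ZMod (p ^ e)) := by norm_num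
    rw [← this, ZMod.isUnit_iff_coprime]
    exact Nat.Coprime.pow_right e ((Nat.coprime_primes (by norm_num) hp).mpr (Ne.symm hp5))
  have hyu : IsUnit y := by
    have : IsUnit (y * y) := by rw [← sq, hy]; exact h5u
    exact isUnit_of_mul_isUnit_left this
  obtain ⟨c, hc⟩ := h2u.exists_right_inv
  have hset : {x : ZMod (p ^ e) | x ^ 2 = x + 1} = {(1 + y) * c, (1 - y) * c} := by
    ext x
    simp only [Set.mem_setOf_eq, Set.mem_insert_iff, Set.mem_singleton_iff]
    constructor
    · intro hx
      have hab : (2 * x - 1 - y) * (2 * x - 1 + y) = 0 := by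
        linear_combination 4 * hx - hy
      have hu : IsUnit ((2 * x - 1 + y) - (2 * x - 1 - y)) := by
        have h2y : (2 * x - 1 + y) - (2 * x - 1 - y) = 2 * y := by ring
        rw [h2y]
        exact h2u.mul hyu
      rcases loc_pp p e hp he _ _ hab hu with h | h
      · left; linear_combination c * h - x * hc
      · right; linear_combination c * h - x * hc
    · intro hx
      rcases hx with h | h <;> rw [h]
      · linear_combination c ^ 2 * hy + (c * (3 + y) + 1) * hc
      · linear_combination c ^ 2 * hy + (c * (3 - y) + 1) * hc
  have hne : (1 + y) * c ≠ (1 - y) * c := by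
    intro hcontra
    have hyc : IsUnit (y * (2 * c)) := by rw [hc]; simpa using hyu
    have : y * (2 * c) = 0 := by linear_combination hcontra
    rw [this] at hyc
    exact not_isUnit_zero hyc
  have : Nat.card {x : ZMod (p ^ e) // x ^ 2 = x + 1}
      = Set.ncard {x : ZMod (p ^ e) | x ^ 2 = x + 1} := Nat.card_coe_set_eq _
  rw [this, hset, Set.ncard_pair hne]

lemma card_sol_mul (a b : ℕ) (h : Nat.Coprime a b) :
    Nat.card {x : ZMod (a * b) // x ^ 2 = x + 1}
      = Nat.card {x : ZMod a // x ^ 2 = x + 1} * Nat.card {x : ZMod b // x ^ 2 = x + 1} := by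
  rw [← Nat.card_prod]
  apply Nat.card_congr
  have e1 : {x : ZMod (a * b) // x ^ 2 = x + 1}
      ≃ {y : ZMod a × ZMod b // y ^ 2 = y + 1} := by
    refine Equiv.subtypeEquiv (ZMod.chineseRemainder h).toEquiv (fun x => ?_)
    constructor
    · intro hx
      show (ZMod.chineseRemainder h) x ^ 2 = (ZMod.chineseRemainder h) x + 1
      rw [← map_pow, hx, map_add, map_one]
    · intro hx
      have hx2 : (ZMod.chineseRemainder h) (x ^ 2) = (ZMod.chineseRemainder h) (x + 1) := by
        rw [map_pow, map_add, map_one]; exact hx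
      exact (ZMod.chineseRemainder h).injective hx2
  have e2 : {y : ZMod a × ZMod b // y ^ 2 = y + 1}
      ≃ {y : ZMod a × ZMod b // y.1 ^ 2 = y.1 + 1 ∧ y.2 ^ 2 = y.2 + 1} := by
    refine Equiv.subtypeEquivRight (fun y => ?_)
    constructor
    · intro hy
      refine ⟨?_, ?_⟩
      · have := congrArg Prod.fst hy
        simpa using this
      · have := congrArg Prod.snd hy
        simpa using this
    · rintro ⟨h1, h2⟩
      have : (y ^ 2).1 = (y + 1).1 ∧ (y ^ 2).2 = (y + 1).2 := by
        constructor
        · simpa using h1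
        · simpa using h2
      exact Prod.ext_iff.mpr this
  exact (e1.trans e2).trans (Equiv.subtypeProdEquivProd
    (p := fun u : ZMod a => u ^ 2 = u + 1) (q := fun u : ZMod b => u ^ 2 = u + 1))

lemma card_sol_prod (S : Finset ℕ) (e : ℕ → ℕ)
    (hS : ∀ p ∈ S, p.Prime ∧ (p % 10 = 1 ∨ p % 10 = 9) ∧ p ≠ 5 ∧ 1 ≤ e p) :
    Nat.card {x : ZMod (∏ p ∈ S, p ^ e p) // x ^ 2 = x + 1} = 2 ^ S.card := by
  classical
  induction S using Finset.induction with
  | empty =>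
    simp only [Finset.prod_empty, Finset.card_empty, pow_zero]
    rw [Nat.card_congr (Equiv.subtypeUnivEquiv (fun x : ZMod 1 => Subsingleton.elim _ _)),
      Nat.card_zmod]
  | @insert q T hq ih =>
    have hq' := hS q (Finset.mem_insert_self q T)
    have hT : ∀ p ∈ T, p.Prime ∧ (p % 10 = 1 ∨ p % 10 = 9) ∧ p ≠ 5 ∧ 1 ≤ e p :=
      fun p hp => hS p (Finset.mem_insert_of_mem hp)
    have hcop : Nat.Coprime (q ^ e q) (∏ p ∈ T, p ^ e p) := by
      apply Nat.Coprime.pow_left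
      apply Nat.Coprime.prod_right
      intro p hp
      apply Nat.Coprime.pow_right
      exact (Nat.coprime_primes hq'.1 (hT p hp).1).mpr (by rintro rfl; exact hq hp)
    rw [Finset.prod_insert hq, Finset.card_insert_of_notMem hq]
    rw [card_sol_mul _ _ hcop, ih hT,
      card_sol_pp q hq'.1 hq'.2.1 hq'.2.2.1 (e q) hq'.2.2.2]
    ring

lemma card_sol_five : Nat.card {x : ZMod 5 // x ^ 2 = x + 1} = 1 := by
  rw [Nat.card_eq_fintype_card]
  decide

theorem count_power_fib_five_times (S : Finset ℕ) (e : ℕ → ℕ) (m : ℕ)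
    (hS : ∀ p ∈ S, p.Prime ∧ (p % 10 = 1 ∨ p % 10 = 9) ∧ p ≠ 5 ∧ 1 ≤ e p)
    (hm : m = 5 * ∏ p ∈ S, p ^ e p) :
    Set.ncard {x : ZMod m | x ^ 2 = x + 1} = 2 ^ S.card := by
  subst hm
  have hcop : Nat.Coprime 5 (∏ p ∈ S, p ^ e p) := by
    apply Nat.Coprime.prod_right
    intro p hp
    obtain ⟨hprime, _, hp5, _⟩ := hS p hp
    exact Nat.Coprime.pow_right _ ((Nat.coprime_primes (by norm_num) hprime).mpr (Ne.symm hp5))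
  have : Set.ncard {x : ZMod (5 * ∏ p ∈ S, p ^ e p) | x ^ 2 = x + 1}
      = Nat.card {x : ZMod (5 * ∏ p ∈ S, p ^ e p) // x ^ 2 = x + 1} :=
    (Nat.card_coe_set_eq _).symm
  rw [this, card_sol_mul _ _ hcop, card_sol_five, card_sol_prod S e hS, one_mul]
end
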